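/- For an explicit s-stage Runge–Kutta method applied with fixed step size h = T/p (p ∈ ℕ, p ≥ 1) to a time-driven ODE, if the internal variable x_{I,i} is periodic of order q at time t^m, then for every stage index r with 1 ≤ r ≤ q the i-th component of the r-th internal stage computed at t^m equals the one computed at t^{m-p}: k_{I,i}^{m,r} = k_{I,i}^{m-p,r}. -/
import Mathlib


open Finset

/-- A variable `v` is periodic of order `ν ≥ 1` with respect to a semi-periodicity
predicate `semi` and input sets `pre`: it is periodic of order 1 if it and all variables
of its input set are semi-periodic, and periodic of order `ν` if it is moreover such that
all variables in its input set are (at least) periodic of order `ν - 1`.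
(Order 0 is vacuous.) -/
def PeriodicOfOrder {V : Type*} (semi : V → Prop) (pre : V → Set V) : ℕ → V → Prop
  | 0, _ => True
  | 1, v => semi v ∧ ∀ w ∈ pre v, semi w
  | ν + 2, v => (semi v ∧ ∀ w ∈ pre v, semi w) ∧
      ∀ w ∈ pre v, PeriodicOfOrder semi pre (ν + 1) w

lemma PeriodicOfOrder.one_of {V : Type*} {semi : V → Prop} {pre : V → Set V}
    {q : ℕ} {v : V} (hq : 1 ≤ q) (h : PeriodicOfOrder semi pre q v) :
    semi v ∧ ∀ w ∈ pre v, semi w := by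
  match q, h with
  | 1, h => exact h
  | (ν + 2), h => exact h.1

lemma PeriodicOfOrder.pre_of {V : Type*} {semi : V → Prop} {pre : V → Set V}
    {ν : ℕ} {v : V} (h : PeriodicOfOrder semi pre (ν + 2) v) :
    ∀ w ∈ pre v, PeriodicOfOrder semi pre (ν + 1) w := h.2

/-- For an explicit `s`-stage Runge–Kutta method applied with fixed step
size `h = T/p` (`p ∈ ℕ`, `p ≥ 1`) to a time-driven ODE, if the internal variable
`x_{I,i}` is periodic of order `q` at time `t^m`, then for every stage index `r` with
`1 ≤ r ≤ q` (here 0-indexed, so `r + 1 ≤ q`) the `i`-th component of the `r`-th internal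
stage computed at `t^m` equals the one computed at `t^{m-p}`. -/
theorem periodic_stage_eq
    {nE nI s : ℕ} (hs : 0 < s)
    (fE : ℝ → Fin nE → ℝ)
    (fI : (Fin nE → ℝ) → (Fin nI → ℝ) → Fin nI → ℝ)
    (a : Fin s → Fin s → ℝ) (b c : Fin s → ℝ)
    (hexplicit : ∀ q r : Fin s, q ≤ r → a q r = 0)
    (hc1 : c ⟨0, hs⟩ = 0)
    (T h : ℝ) (p : ℕ) (hp : 1 ≤ p) (hT : h = T / p)
    (t : ℕ → ℝ) (ht : ∀ m, t (m + 1) = t m + h)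
    (xE : ℕ → Fin nE → ℝ) (xI : ℕ → Fin nI → ℝ)
    (kI : ℕ → Fin s → Fin nI → ℝ)
    (hxE : ∀ m, xE m = fE (t m))
    (hstage : ∀ (m : ℕ) (q : Fin s), kI m q =
        fI (fE (t m + c q * h))
          (fun i => xI m i +
            h * ∑ r ∈ univ.filter (fun r : Fin s => r < q), a q r * kI m r i))
    (hupdate : ∀ (m : ℕ) (i : Fin nI),
        xI (m + 1) i = xI m i + h * ∑ q, b q * kI m q i)
    (pre : Fin nE ⊕ Fin nI → Set (Fin nE ⊕ Fin nI))
    (hpreE : ∀ j : Fin nE, pre (Sum.inl j) = ∅)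
    (hdep : ∀ (i : Fin nI) (u w : Fin nE → ℝ) (v z : Fin nI → ℝ),
        (∀ j : Fin nE, Sum.inl j ∈ pre (Sum.inr i) → u j = w j) →
        (∀ j : Fin nI, Sum.inr j ∈ pre (Sum.inr i) → v j = z j) →
        fI u v i = fI w z i)
    (m : ℕ) (hm : p ≤ m) (i : Fin nI) (q : ℕ) (hq : 1 ≤ q)
    (hper : PeriodicOfOrder
        (Sum.elim
          (fun j : Fin nE => ∀ r : Fin s,
            fE (t m + c r * h) j = fE (t (m - p) + c r * h) j)
          (fun j : Fin nI => xI m j = xI (m - p) j))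
        pre q (Sum.inr i)) :
    ∀ r : Fin s, (r : ℕ) + 1 ≤ q → kI m r i = kI (m - p) r i := by
  set semi : Fin nE ⊕ Fin nI → Prop := Sum.elim
      (fun j : Fin nE => ∀ r : Fin s,
        fE (t m + c r * h) j = fE (t (m - p) + c r * h) j)
      (fun j : Fin nI => xI m j = xI (m - p) j) with hsemi
  suffices H : ∀ n : ℕ, ∀ (r : Fin s) (j : Fin nI) (q' : ℕ), (r : ℕ) = n →
      (r : ℕ) + 1 ≤ q' → PeriodicOfOrder semi pre q' (Sum.inr j) →
      kI m r j = kI (m - p) r j by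
    exact fun r hr => H r r i q rfl hr hper
  intro n
  induction n using Nat.strong_induction_on with
  | _ n IH =>
    intro r j q' hrn hq' hperj
    rw [hstage m r, hstage (m - p) r]
    refine hdep j _ _ _ _ ?_ ?_
    · intro jE hjE
      exact ((hperj.one_of (by omega)).2 (Sum.inl jE) hjE) r
    · intro jI hjI
      have hx : xI m jI = xI (m - p) jI :=
        (hperj.one_of (by omega)).2 (Sum.inr jI) hjI
      have hsum : ∑ r' ∈ univ.filter (fun r' : Fin s => r' < r), a r r' * kI m r' jI =
          ∑ r' ∈ univ.filter (fun r' : Fin s => r' < r), a r r' * kI (m - p) r' jI := by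
        refine Finset.sum_congr rfl fun r' hr' => ?_
        rw [Finset.mem_filter] at hr'
        have hlt : (r' : ℕ) < n := by
          have := hr'.2
          rw [Fin.lt_def] at this
          omega
        obtain ⟨ν, rfl⟩ : ∃ ν, q' = ν + 2 := ⟨q' - 2, by omega⟩
        have := hperj.pre_of (Sum.inr jI) hjI
        rw [IH (r' : ℕ) hlt r' jI (ν + 1) rfl (by omega) this]
      rw [hx, hsum]
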